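/- If G is a graph of order n with δ_h ≥ 1 whose graph Dist(G;2) has no isolated vertex, then γ_{2sr}(G) ≤ ((2 ln(δ_h + 1) + δ_h + 3)/(δ_h + 1)) · n − 2ν_h(G). -/

import Mathlib

open Finset

noncomputable section
open scoped Classical

variable {n : ℕ}

/-- The set of vertices at distance exactly 2 from `i`. -/
def N2 (G : SimpleGraph (Fin n)) (i : Fin n) : Finset (Fin n) :=
  Finset.univ.filter (fun j => G.dist i j = 2)

/-- The neighborhood of `i`. -/
def Nbr (G : SimpleGraph (Fin n)) (i : Fin n) : Finset (Fin n) :=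
  Finset.univ.filter (fun j => G.Adj i j)

/-- Hop degree of a vertex. -/
def hopDeg (G : SimpleGraph (Fin n)) (i : Fin n) : ℕ := (N2 G i).card

/-- Minimum hop degree. -/
def minHopDeg (G : SimpleGraph (Fin n)) : ℕ := ⨅ i, hopDeg G i

/-- Minimum degree. -/
def minDeg (G : SimpleGraph (Fin n)) : ℕ := ⨅ i, (Nbr G i).card

def IsHopDomSet (G : SimpleGraph (Fin n)) (S : Finset (Fin n)) : Prop :=
  ∀ u, u ∉ S → ∃ v ∈ S, G.dist u v = 2

def IsTwoStepDomSet (G : SimpleGraph (Fin n)) (S : Finset (Fin n)) : Prop :=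
  ∀ u : Fin n, ∃ v ∈ S, G.dist u v = 2

def IsRestrainedHopDomSet (G : SimpleGraph (Fin n)) (S : Finset (Fin n)) : Prop :=
  IsHopDomSet G S ∧ ∀ u, u ∉ S → ∃ v, v ∉ S ∧ G.Adj u v

def IsTotalRestrainedHopDomSet (G : SimpleGraph (Fin n)) (S : Finset (Fin n)) : Prop :=
  IsTwoStepDomSet G S ∧ ∀ u, u ∉ S → ∃ v, v ∉ S ∧ G.Adj u v

def IsTwoStepRestrainedDomSet (G : SimpleGraph (Fin n)) (S : Finset (Fin n)) : Prop :=
  IsHopDomSet G S ∧ ∀ u, u ∉ S → ∃ v, v ∉ S ∧ G.dist u v = 2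

def IsTotalTwoStepRestrainedDomSet (G : SimpleGraph (Fin n)) (S : Finset (Fin n)) : Prop :=
  IsTwoStepDomSet G S ∧ ∀ u, u ∉ S → ∃ v, v ∉ S ∧ G.dist u v = 2

def hopDomNum (G : SimpleGraph (Fin n)) : ℕ :=
  sInf {k | ∃ S : Finset (Fin n), IsHopDomSet G S ∧ S.card = k}

def twoStepDomNum (G : SimpleGraph (Fin n)) : ℕ :=
  sInf {k | ∃ S : Finset (Fin n), IsTwoStepDomSet G S ∧ S.card = k}

def rhDomNum (G : SimpleGraph (Fin n)) : ℕ :=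
  sInf {k | ∃ S : Finset (Fin n), IsRestrainedHopDomSet G S ∧ S.card = k}

def trhDomNum (G : SimpleGraph (Fin n)) : ℕ :=
  sInf {k | ∃ S : Finset (Fin n), IsTotalRestrainedHopDomSet G S ∧ S.card = k}

def tsrDomNum (G : SimpleGraph (Fin n)) : ℕ :=
  sInf {k | ∃ S : Finset (Fin n), IsTwoStepRestrainedDomSet G S ∧ S.card = k}

def ttsrDomNum (G : SimpleGraph (Fin n)) : ℕ :=
  sInf {k | ∃ S : Finset (Fin n), IsTotalTwoStepRestrainedDomSet G S ∧ S.card = k}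

/-- The graph `Dist(G;2)` joining vertices at distance exactly 2 in `G`. -/
def dist2Graph (G : SimpleGraph (Fin n)) : SimpleGraph (Fin n) where
  Adj u v := u ≠ v ∧ G.dist u v = 2
  symm := by
    constructor
    intro u v h
    exact ⟨h.1.symm, by rw [SimpleGraph.dist_comm]; exact h.2⟩
  loopless := ⟨fun v h => h.1 rfl⟩

def domNum (H : SimpleGraph (Fin n)) : ℕ :=
  sInf {k | ∃ S : Finset (Fin n), (∀ u, u ∉ S → ∃ v ∈ S, H.Adj u v) ∧ S.card = k}

def totalDomNum (H : SimpleGraph (Fin n)) : ℕ :=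
  sInf {k | ∃ S : Finset (Fin n), (∀ u : Fin n, ∃ v ∈ S, H.Adj u v) ∧ S.card = k}

/-- Matching number: maximum number of edges in a matching. -/
def matchingNum (G : SimpleGraph (Fin n)) : ℕ :=
  sSup {k | ∃ M : SimpleGraph.Subgraph G, M.IsMatching ∧ M.edgeSet.ncard = k}

/-- A hop matching: a set of paths of length two, no two of which share an end vertex. -/
def IsHopMatching (G : SimpleGraph (Fin n)) (H : Finset (Fin n × Fin n × Fin n)) : Prop :=
  (∀ t ∈ H, G.Adj t.1 t.2.1 ∧ G.Adj t.2.1 t.2.2 ∧ t.1 ≠ t.2.2) ∧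
  ∀ t ∈ H, ∀ t' ∈ H, t ≠ t' →
    t.1 ≠ t'.1 ∧ t.1 ≠ t'.2.2 ∧ t.2.2 ≠ t'.1 ∧ t.2.2 ≠ t'.2.2

/-- Hop matching number. -/
def hopMatchingNum (G : SimpleGraph (Fin n)) : ℕ :=
  sSup {k | ∃ H : Finset (Fin n × Fin n × Fin n), IsHopMatching G H ∧ H.card = k}

def frh (G : SimpleGraph (Fin n)) (p : Fin n → ℝ) : ℝ :=
  (∑ i, p i) + (∑ i, (1 - p i) * ∏ j ∈ N2 G i, (1 - p j)) +
  ∑ i, (1 - p i) * (1 - (1 - p i) * ∏ j ∈ N2 G i, (1 - p j)) *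
    ∏ j ∈ Nbr G i, (p j + (1 - p j) * ∏ k ∈ N2 G j, (1 - p k))

def f2sr (G : SimpleGraph (Fin n)) (p : Fin n → ℝ) : ℝ :=
  (∑ i, p i) + (∑ i, (1 - p i) * ∏ j ∈ N2 G i, (1 - p j)) +
  ∑ i, (1 - p i) * (1 - (1 - p i) * ∏ j ∈ N2 G i, (1 - p j)) *
    ∏ j ∈ N2 G i, (p j + (1 - p j) * ∏ k ∈ N2 G j, (1 - p k))

def ZSet (G : SimpleGraph (Fin n)) (X : Finset (Fin n)) : Finset (Fin n) :=
  Finset.univ.filter (fun i => i ∉ X ∧ N2 G i ∩ X = ∅)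

def YSet (G : SimpleGraph (Fin n)) (X : Finset (Fin n)) : Finset (Fin n) :=
  Finset.univ.filter (fun i => i ∉ X ∪ ZSet G X ∧ Nbr G i ⊆ X ∪ ZSet G X)

def DSet (G : SimpleGraph (Fin n)) (X : Finset (Fin n)) : Finset (Fin n) :=
  X ∪ ZSet G X ∪ YSet G X

/-!
Pick `X ⊆ V` at random, each vertex independently with probability `p`. Let `Z` be the vertices
outside `X` with no hop neighbour in `X`, and `Y` the vertices outside `X ∪ Z` all of whose hop
neighbours lie in `X ∪ Z`. Then `X ∪ Z ∪ Y` is a 2-step restrained dominating set. Fixing a hop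
neighbour `f i` of every vertex `i` that has one, `Y ⊆ {i | f i ∈ X ∪ Z}`, so the expected size of
`X ∪ Z ∪ Y` is at most `2n (p + (1 - p)^(δ_h + 1))`. For `p = ln(δ_h + 1)/(δ_h + 1)` this is at most
`2n (ln(δ_h + 1) + 1)/(δ_h + 1)`. The claimed bound exceeds this by `n - 2ν_h(G) ≥ 0`, since the
ends of the paths of a hop matching are `2ν_h(G)` distinct vertices.
-/

section BernoulliWeight

variable {α : Type*} [Fintype α] [DecidableEq α]

def bernoulliWeight (p : ℝ) (X : Finset α) : ℝ := p ^ #X * (1 - p) ^ #Xᶜ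

lemma bernoulliWeight_nonneg {p : ℝ} (hp0 : 0 ≤ p) (hp1 : p ≤ 1) (X : Finset α) :
    0 ≤ bernoulliWeight p X :=
  mul_nonneg (pow_nonneg hp0 _) (pow_nonneg (sub_nonneg.2 hp1) _)

lemma sum_bernoulliWeight_disjoint (p : ℝ) (A : Finset α) :
    ∑ X with Disjoint X A, bernoulliWeight p X = (1 - p) ^ #A := by
  have hfilter : ({X | Disjoint X A} : Finset (Finset α)) = Aᶜ.powerset := by
    ext X; simp [subset_compl_iff_disjoint_right]
  have hcard : ∀ X ∈ Aᶜ.powerset, #Xᶜ = (#Aᶜ - #X) + #A := by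
    intro X hX
    have := card_le_card (mem_powerset.1 hX)
    simp only [card_compl] at this ⊢
    have := card_le_univ A
    omega
  calc ∑ X with Disjoint X A, bernoulliWeight p X
      = ∑ X ∈ Aᶜ.powerset, p ^ #X * (1 - p) ^ (#Aᶜ - #X) * (1 - p) ^ #A := by
        rw [hfilter]
        refine sum_congr rfl fun X hX => ?_
        rw [bernoulliWeight, hcard X hX, pow_add, mul_assoc]
    _ = (1 - p) ^ #A := by
        rw [← sum_mul, sum_pow_mul_eq_add_pow]
        simp

lemma sum_bernoulliWeight (p : ℝ) : ∑ X : Finset α, bernoulliWeight p X = 1 := by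
  simpa using sum_bernoulliWeight_disjoint (α := α) p ∅

lemma sum_bernoulliWeight_mem (p : ℝ) (i : α) :
    ∑ X with i ∈ X, bernoulliWeight p X = p := by
  have h := sum_filter_add_sum_filter_not univ (fun X => i ∈ X) (bernoulliWeight p)
  simp only [← disjoint_singleton_right] at h
  rw [sum_bernoulliWeight, sum_bernoulliWeight_disjoint] at h
  simp only [card_singleton, pow_one] at h
  linarith

lemma sum_bernoulliWeight_mul_card (p : ℝ) (F : Finset α → Finset α) :
    ∑ X, bernoulliWeight p X * #(F X) = ∑ i, ∑ X with i ∈ F X, bernoulliWeight p X := by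
  simp only [card_eq_sum_ones, Nat.cast_sum, Nat.cast_one, mul_sum, mul_one]
  exact sum_comm' (by simp)

lemma le_sum_bernoulliWeight_mul {p c : ℝ} (hp0 : 0 ≤ p) (hp1 : p ≤ 1) {f : Finset α → ℝ}
    (h : ∀ X, c ≤ f X) : c ≤ ∑ X, bernoulliWeight p X * f X :=
  calc c = ∑ X, bernoulliWeight p X * c := by rw [← sum_mul, sum_bernoulliWeight, one_mul]
    _ ≤ ∑ X, bernoulliWeight p X * f X :=
      sum_le_sum fun X _ => mul_le_mul_of_nonneg_left (h X) (bernoulliWeight_nonneg hp0 hp1 X)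

end BernoulliWeight

section TwoStepRestrained

variable {G : SimpleGraph (Fin n)} {X : Finset (Fin n)} {i : Fin n}

lemma mem_N2_comm {u v : Fin n} : v ∈ N2 G u ↔ u ∈ N2 G v := by
  simp [N2, SimpleGraph.dist_comm]

lemma notMem_N2_self (G : SimpleGraph (Fin n)) (i : Fin n) : i ∉ N2 G i := by
  simp [N2]

lemma minHopDeg_le_hopDeg (G : SimpleGraph (Fin n)) (i : Fin n) : minHopDeg G ≤ hopDeg G i :=
  ciInf_le (OrderBot.bddBelow _) i

lemma mem_ZSet_iff_disjoint : i ∈ ZSet G X ↔ Disjoint X (insert i (N2 G i)) := by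
  rw [disjoint_insert_right, disjoint_comm, disjoint_iff_inter_eq_empty]
  simp [ZSet]

lemma notMem_of_mem_ZSet (h : i ∈ ZSet G X) : i ∉ X := by
  simp only [ZSet, mem_filter] at h
  exact h.2.1

def Y2Set (G : SimpleGraph (Fin n)) (X : Finset (Fin n)) : Finset (Fin n) :=
  {i | i ∉ X ∪ ZSet G X ∧ N2 G i ⊆ X ∪ ZSet G X}

def D2Set (G : SimpleGraph (Fin n)) (X : Finset (Fin n)) : Finset (Fin n) :=
  X ∪ ZSet G X ∪ Y2Set G X

lemma isTwoStepRestrainedDomSet_D2Set (G : SimpleGraph (Fin n)) (X : Finset (Fin n)) :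
    IsTwoStepRestrainedDomSet G (D2Set G X) := by
  have notMem_D2Set : ∀ {u}, u ∉ D2Set G X ↔ u ∉ X ∪ ZSet G X ∧ ¬ N2 G u ⊆ X ∪ ZSet G X := by
    intro u
    simp only [D2Set, Y2Set, mem_union, mem_filter, mem_univ, true_and]
    tauto
  refine ⟨fun u hu => ?_, fun u hu => ?_⟩
  · obtain ⟨huXZ, -⟩ := notMem_D2Set.1 hu
    have hmeet : ¬ Disjoint (N2 G u) X := fun h =>
      huXZ (mem_union_right _ (mem_ZSet_iff_disjoint.2
        (disjoint_insert_right.2 ⟨fun huX => huXZ (mem_union_left _ huX), h.symm⟩)))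
    obtain ⟨v, hvN2, hvX⟩ := not_disjoint_iff.1 hmeet
    exact ⟨v, mem_union_left _ (mem_union_left _ hvX), (mem_filter.1 hvN2).2⟩
  · obtain ⟨huXZ, hN2⟩ := notMem_D2Set.1 hu
    obtain ⟨w, hwN2, hwXZ⟩ := not_subset.1 hN2
    refine ⟨w, notMem_D2Set.2 ⟨hwXZ, fun h => huXZ (h (mem_N2_comm.1 hwN2))⟩, ?_⟩
    exact (mem_filter.1 hwN2).2

lemma tsrDomNum_le_card_D2Set (G : SimpleGraph (Fin n)) (X : Finset (Fin n)) :
    tsrDomNum G ≤ #(D2Set G X) :=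
  Nat.sInf_le ⟨D2Set G X, isTwoStepRestrainedDomSet_D2Set G X, rfl⟩

lemma exists_mem_N2_of_nonempty (G : SimpleGraph (Fin n)) :
    ∃ f : Fin n → Fin n, ∀ i, (N2 G i).Nonempty → f i ∈ N2 G i := by
  choose! f hf using fun i (h : (N2 G i).Nonempty) => h
  exact ⟨f, hf⟩

lemma Y2Set_subset {f : Fin n → Fin n} (hf : ∀ i, (N2 G i).Nonempty → f i ∈ N2 G i) :
    Y2Set G X ⊆ ({i | f i ∈ X ∪ ZSet G X} : Finset (Fin n)) := by
  intro i hi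
  simp only [Y2Set, mem_filter, mem_univ, true_and] at hi ⊢
  obtain ⟨hiXZ, hN2⟩ := hi
  rcases (N2 G i).eq_empty_or_nonempty with hempty | hne
  · exfalso
    refine hiXZ (mem_union_right _ (mem_ZSet_iff_disjoint.2 ?_))
    rw [hempty]
    simpa using fun hiX => hiXZ (mem_union_left _ hiX)
  · exact hN2 (hf i hne)

lemma card_D2Set_le {f : Fin n → Fin n} (hf : ∀ i, (N2 G i).Nonempty → f i ∈ N2 G i) :
    #(D2Set G X) ≤ #X + #(ZSet G X) + #({i | f i ∈ X ∪ ZSet G X} : Finset (Fin n)) :=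
  calc #(D2Set G X) ≤ #X + #(ZSet G X) + #(Y2Set G X) :=
        (card_union_le _ _).trans (by gcongr; exact card_union_le _ _)
    _ ≤ _ := by gcongr; exact Y2Set_subset hf

lemma sum_bernoulliWeight_mem_ZSet (p : ℝ) (G : SimpleGraph (Fin n)) (i : Fin n) :
    ∑ X with i ∈ ZSet G X, bernoulliWeight p X = (1 - p) ^ (hopDeg G i + 1) := by
  simp only [mem_ZSet_iff_disjoint, sum_bernoulliWeight_disjoint,
    card_insert_of_notMem (notMem_N2_self G i), hopDeg]

lemma sum_bernoulliWeight_mem_union_ZSet (p : ℝ) (G : SimpleGraph (Fin n)) (i : Fin n) :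
    ∑ X with i ∈ X ∪ ZSet G X, bernoulliWeight p X = p + (1 - p) ^ (hopDeg G i + 1) := by
  have hdisj : Disjoint (α := Finset (Finset (Fin n))) {X | i ∈ X} {X | i ∈ ZSet G X} :=
    disjoint_filter.2 fun _ _ hX hZ => notMem_of_mem_ZSet hZ hX
  simp only [mem_union, filter_or, sum_union hdisj, sum_bernoulliWeight_mem,
    sum_bernoulliWeight_mem_ZSet]

lemma tsrDomNum_le_two_mul_add_pow (G : SimpleGraph (Fin n)) {p : ℝ} (hp0 : 0 ≤ p) (hp1 : p ≤ 1) :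
    (tsrDomNum G : ℝ) ≤ 2 * n * (p + (1 - p) ^ (minHopDeg G + 1)) := by
  obtain ⟨f, hf⟩ := exists_mem_N2_of_nonempty G
  set q := (1 - p) ^ (minHopDeg G + 1)
  have hpow : ∀ i, (1 - p) ^ (hopDeg G i + 1) ≤ q := fun i =>
    pow_le_pow_of_le_one (sub_nonneg.2 hp1) (by linarith)
      (Nat.succ_le_succ (minHopDeg_le_hopDeg G i))
  calc (tsrDomNum G : ℝ)
      ≤ ∑ X, bernoulliWeight p X *
          (#X + #(ZSet G X) + #({i | f i ∈ X ∪ ZSet G X} : Finset _)) :=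
        le_sum_bernoulliWeight_mul hp0 hp1 fun X => by
          exact_mod_cast (tsrDomNum_le_card_D2Set G X).trans (card_D2Set_le hf)
    _ = ∑ i, p + ∑ i, (1 - p) ^ (hopDeg G i + 1)
          + ∑ i, (p + (1 - p) ^ (hopDeg G (f i) + 1)) := by
        simp only [mul_add, sum_add_distrib, sum_bernoulliWeight_mul_card, mem_filter, mem_univ,
          true_and, sum_bernoulliWeight_mem, sum_bernoulliWeight_mem_ZSet,
          sum_bernoulliWeight_mem_union_ZSet]
        ring
    _ ≤ ∑ i : Fin n, p + ∑ i : Fin n, q + ∑ i : Fin n, (p + q) := by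
        gcongr with i _ i _
        · exact hpow i
        · exact hpow (f i)
    _ = 2 * n * (p + q) := by
        simp only [sum_const, card_univ, Fintype.card_fin, nsmul_eq_mul]
        ring

end TwoStepRestrained

lemma two_mul_card_le_of_isHopMatching {G : SimpleGraph (Fin n)}
    {H : Finset (Fin n × Fin n × Fin n)} (hH : IsHopMatching G H) : 2 * #H ≤ n := by
  have hinj : Set.InjOn
      (Sum.elim (fun t : Fin n × Fin n × Fin n => t.1) (fun t : Fin n × Fin n × Fin n => t.2.2))
      (H.disjSum H : Set _) := by
    rintro (t | t) ht (t' | t') ht' heq <;>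
      simp only [mem_coe, inl_mem_disjSum, inr_mem_disjSum, Sum.elim_inl, Sum.elim_inr,
        Sum.inl.injEq, Sum.inr.injEq, reduceCtorEq] at ht ht' heq ⊢
    all_goals
      by_cases htt : t = t'
      · subst htt
        have := (hH.1 t ht).2.2
        tauto
      · have := hH.2 t ht t' ht' htt
        tauto
  simpa [two_mul] using card_le_card_of_injOn _ (fun _ _ => mem_univ _) hinj

lemma two_mul_hopMatchingNum_le (G : SimpleGraph (Fin n)) : 2 * hopMatchingNum G ≤ n := by
  have hne : {k | ∃ H, IsHopMatching G H ∧ #H = k}.Nonempty :=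
    ⟨0, ∅, ⟨by simp, by simp⟩, card_empty⟩
  have hbdd : BddAbove {k | ∃ H, IsHopMatching G H ∧ #H = k} :=
    ⟨n, fun _ ⟨H, hH, hk⟩ => hk ▸ by linarith [two_mul_card_le_of_isHopMatching hH]⟩
  obtain ⟨H, hH, hk⟩ := Nat.sSup_mem hne hbdd
  rw [hopMatchingNum, ← hk]
  exact two_mul_card_le_of_isHopMatching hH

theorem stmt12_general {n : ℕ} (G : SimpleGraph (Fin n)) :
    (tsrDomNum G : ℝ) ≤
      (2 * Real.log (minHopDeg G + 1) + minHopDeg G + 3) / (minHopDeg G + 1) * n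
        - 2 * hopMatchingNum G := by
  set δ := minHopDeg G
  set L := Real.log (δ + 1)
  have hδ : (0 : ℝ) < δ + 1 := by positivity
  have hL0 : 0 ≤ L := Real.log_nonneg (by linarith [δ.cast_nonneg (α := ℝ)])
  have hLδ : L ≤ δ + 1 := by linarith [Real.log_le_sub_one_of_pos hδ]
  have hq : (1 - L / (δ + 1)) ^ (δ + 1) ≤ (δ + 1 : ℝ)⁻¹ := by
    simpa [L, Real.exp_neg, Real.exp_log hδ] using
      Real.one_sub_div_pow_le_exp_neg (n := δ + 1) (t := L) (by push_cast; exact hLδ)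
  have hν : 2 * (hopMatchingNum G : ℝ) ≤ n := by exact_mod_cast two_mul_hopMatchingNum_le G
  calc (tsrDomNum G : ℝ)
      ≤ 2 * n * (L / (δ + 1) + (1 - L / (δ + 1)) ^ (δ + 1)) :=
        tsrDomNum_le_two_mul_add_pow G (div_nonneg hL0 hδ.le) ((div_le_one hδ).2 hLδ)
    _ ≤ 2 * n * (L / (δ + 1) + (δ + 1 : ℝ)⁻¹) := by gcongr
    _ = (2 * L + δ + 3) / (δ + 1) * n - n := by field_simp; ring
    _ ≤ _ := by linarith

theorem stmt12 {n : ℕ} (G : SimpleGraph (Fin n)) (hδh : 1 ≤ minHopDeg G)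
    (hiso : ∀ v : Fin n, ∃ u, (dist2Graph G).Adj v u) :
    (tsrDomNum G : ℝ) ≤
      (2 * Real.log (minHopDeg G + 1) + minHopDeg G + 3) / (minHopDeg G + 1) * n
        - 2 * hopMatchingNum G :=
  stmt12_general G
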